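/- arXiv:2004.06960 — 4 statements merged into one kernel-verified Lean document; each statement's English description precedes it below -/
import Mathlib

section
/- For every r > 0 and every symmetric matrices Γ ⪰ 0 and Σ ≻ 0 in ℝ^{n×n}, and any A ∈ ℝ^{n×n}, the ellipsoid 𝔹(AΓAᵀ + Σ, r) is contained in the Minkowski sum A·𝔹(Γ, r) + 𝔹(Σ, r). -/
/-!
Write `S = AΓAᵀ + Σ`. Since `S` is invertible, every point of `𝔹(S, r)` is `S y` with
`yᵀ S y ≤ r`. Splitting `S y = A (Γ^{1/2} u) + Σ^{1/2} v` with `u = Γ^{1/2} Aᵀ y` and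
`v = Σ^{1/2} y` gives `uᵀu + vᵀv = yᵀ S y ≤ r`, so `u` and `v` are admissible in
`𝔹(Γ, r)` and `𝔹(Σ, r)`.
-/

open Matrix Pointwise

/-- The positive semidefinite square root of a positive semidefinite matrix, as defined in
Mathlib (December 2024) under this name; it has since been removed from Mathlib. -/
noncomputable def Matrix.PosSemidef.sqrt {n : Type*} [Fintype n] [DecidableEq n]
    {A : Matrix n n ℝ} (hA : A.PosSemidef) : Matrix n n ℝ :=
  hA.1.eigenvectorUnitary.1 * diagonal ((↑) ∘ (√·) ∘ hA.1.eigenvalues) *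
    (star hA.1.eigenvectorUnitary : Matrix n n ℝ)

/-- The ellipsoid `𝔹(Γ, r) = {x = Γ^{1/2} z : zᵀ z ≤ r}` for a PSD matrix `Γ`. -/
noncomputable def ball {n : ℕ} (Γ : Matrix (Fin n) (Fin n) ℝ)
    (hΓ : Γ.PosSemidef) (r : ℝ) : Set (Fin n → ℝ) :=
  {x | ∃ z : Fin n → ℝ, x = hΓ.sqrt *ᵥ z ∧ z ⬝ᵥ z ≤ r}

namespace Matrix.PosSemidef

variable {ι : Type*} [Fintype ι] [DecidableEq ι] {A : Matrix ι ι ℝ}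

theorem sqrt_mul_self (hA : A.PosSemidef) : hA.sqrt * hA.sqrt = A := by
  unfold Matrix.PosSemidef.sqrt
  conv_rhs => rw [hA.1.spectral_theorem, Unitary.conjStarAlgAut_apply]
  set U : Matrix ι ι ℝ := hA.1.eigenvectorUnitary.1
  have hU : (star hA.1.eigenvectorUnitary : Matrix ι ι ℝ) * U = 1 := by simp [U]
  set V : Matrix ι ι ℝ := (star hA.1.eigenvectorUnitary : Matrix ι ι ℝ)
  set D : Matrix ι ι ℝ := diagonal ((↑) ∘ (√·) ∘ hA.1.eigenvalues)
  have hD : D * D = diagonal (RCLike.ofReal ∘ hA.1.eigenvalues) := by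
    simp only [D, diagonal_mul_diagonal]
    congr 1
    funext i
    simp [Real.mul_self_sqrt (hA.eigenvalues_nonneg i)]
  calc U * D * V * (U * D * V) = U * (D * (V * U) * D) * V := by simp only [mul_assoc]
    _ = _ := by rw [hU, mul_one, hD]

theorem posSemidef_sqrt (hA : A.PosSemidef) : hA.sqrt.PosSemidef := by
  unfold Matrix.PosSemidef.sqrt
  have hD := (posSemidef_diagonal_iff (d := ((↑) ∘ (√·) ∘ hA.1.eigenvalues : ι → ℝ))).mpr
    fun i => by simp [Real.sqrt_nonneg]
  simpa [star_eq_conjTranspose] using hD.mul_mul_conjTranspose_same hA.1.eigenvectorUnitary.1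

theorem transpose_sqrt (hA : A.PosSemidef) : hA.sqrtᵀ = hA.sqrt :=
  hA.posSemidef_sqrt.isHermitian.eq

theorem sqrt_mulVec_sqrt_mulVec (hA : A.PosSemidef) (x : ι → ℝ) :
    hA.sqrt *ᵥ (hA.sqrt *ᵥ x) = A *ᵥ x := by
  rw [mulVec_mulVec, hA.sqrt_mul_self]

theorem sqrt_mulVec_dotProduct_self (hA : A.PosSemidef) (x : ι → ℝ) :
    (hA.sqrt *ᵥ x) ⬝ᵥ (hA.sqrt *ᵥ x) = x ⬝ᵥ (A *ᵥ x) := by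
  rw [← hA.sqrt_mulVec_sqrt_mulVec, dotProduct_comm, ← hA.transpose_sqrt,
    dotProduct_transpose_mulVec, hA.transpose_sqrt]

theorem isUnit_det_sqrt (hA : A.PosSemidef) (hdet : IsUnit A.det) : IsUnit hA.sqrt.det := by
  rw [← hA.sqrt_mul_self, det_mul] at hdet
  exact isUnit_of_mul_isUnit_left hdet

end Matrix.PosSemidef

section Ellipsoid

variable {n : ℕ}

theorem exists_mulVec_eq_of_mem_ball {S : Matrix (Fin n) (Fin n) ℝ} (hS : S.PosSemidef)
    (hdet : IsUnit S.det) {r : ℝ} {x : Fin n → ℝ} (hx : x ∈ ball S hS r) :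
    ∃ y, S *ᵥ y = x ∧ y ⬝ᵥ (S *ᵥ y) ≤ r := by
  obtain ⟨z, rfl, hz⟩ := hx
  have hsqrt : hS.sqrt *ᵥ (hS.sqrt⁻¹ *ᵥ z) = z := by
    rw [mulVec_mulVec, mul_nonsing_inv _ (hS.isUnit_det_sqrt hdet), one_mulVec]
  refine ⟨hS.sqrt⁻¹ *ᵥ z, ?_, ?_⟩
  · rw [← hS.sqrt_mulVec_sqrt_mulVec, hsqrt]
  · rwa [← hS.sqrt_mulVec_dotProduct_self, hsqrt]

theorem add_mulVec_mem_image_ball_add_ball (A : Matrix (Fin n) (Fin n) ℝ)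
    {Γ Sig : Matrix (Fin n) (Fin n) ℝ} (hΓ : Γ.PosSemidef) (hSig : Sig.PosSemidef) {r : ℝ}
    {y : Fin n → ℝ} (hy : y ⬝ᵥ ((A * Γ * Aᵀ + Sig) *ᵥ y) ≤ r) :
    (A * Γ * Aᵀ + Sig) *ᵥ y ∈ (A *ᵥ ·) '' ball Γ hΓ r + ball Sig hSig r := by
  set u := hΓ.sqrt *ᵥ (Aᵀ *ᵥ y)
  set v := hSig.sqrt *ᵥ y
  have hu : u ⬝ᵥ u = y ⬝ᵥ ((A * Γ * Aᵀ) *ᵥ y) := by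
    rw [hΓ.sqrt_mulVec_dotProduct_self, dotProduct_comm, dotProduct_transpose_mulVec]
    simp only [mulVec_mulVec, mul_assoc]
  have hv : v ⬝ᵥ v = y ⬝ᵥ (Sig *ᵥ y) := hSig.sqrt_mulVec_dotProduct_self y
  have huv : u ⬝ᵥ u + v ⬝ᵥ v ≤ r := by
    rwa [hu, hv, ← dotProduct_add, ← add_mulVec]
  have hsplit : (A * Γ * Aᵀ + Sig) *ᵥ y = A *ᵥ (hΓ.sqrt *ᵥ u) + hSig.sqrt *ᵥ v := by
    rw [hΓ.sqrt_mulVec_sqrt_mulVec, hSig.sqrt_mulVec_sqrt_mulVec, add_mulVec, mulVec_mulVec,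
      mulVec_mulVec]
  have hnonneg (w : Fin n → ℝ) : 0 ≤ w ⬝ᵥ w := by simpa using dotProduct_star_self_nonneg w
  rw [hsplit]
  exact Set.add_mem_add ⟨_, ⟨u, rfl, (le_add_of_nonneg_right (hnonneg v)).trans huv⟩, rfl⟩
    ⟨v, rfl, (le_add_of_nonneg_left (hnonneg u)).trans huv⟩

end Ellipsoid

theorem stmt_0_general {n : ℕ} (A Γ Sig : Matrix (Fin n) (Fin n) ℝ)
    (hΓ : Γ.PosSemidef) (hSig : Sig.PosDef) (r : ℝ)
    (hsum : (A * Γ * Aᵀ + Sig).PosSemidef) :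
    ball (A * Γ * Aᵀ + Sig) hsum r ⊆
      (A *ᵥ ·) '' ball Γ hΓ r + ball Sig hSig.posSemidef r := by
  intro x hx
  have hdet : IsUnit (A * Γ * Aᵀ + Sig).det := by
    have hAΓA : (A * Γ * Aᵀ).PosSemidef := by simpa using hΓ.mul_mul_conjTranspose_same A
    exact (isUnit_iff_isUnit_det _).mp (PosDef.posSemidef_add hAΓA hSig).isUnit
  obtain ⟨y, rfl, hy⟩ := exists_mulVec_eq_of_mem_ball hsum hdet hx
  exact add_mulVec_mem_image_ball_add_ball A hΓ hSig.posSemidef hy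

/-- `𝔹(AΓAᵀ + Σ, r) ⊆ A·𝔹(Γ, r) + 𝔹(Σ, r)`. -/
theorem stmt_0 {n : ℕ} (A Γ Sig : Matrix (Fin n) (Fin n) ℝ)
    (hΓ : Γ.PosSemidef) (hSig : Sig.PosDef) (r : ℝ) (hr : 0 < r)
    (hsum : (A * Γ * Aᵀ + Sig).PosSemidef) :
    ball (A * Γ * Aᵀ + Sig) hsum r ⊆
      (A *ᵥ ·) '' ball Γ hΓ r + ball Sig hSig.posSemidef r :=
  stmt_0_general A Γ Sig hΓ hSig r hsum
end

section
/- Let {w_k} have correlation bound Γ_w for matrix A, and suppose W ≻ 0 satisfies A W Aᵀ + Γ_w ⪯ W. Then the random recursion z_{k+1} = A z_k + w_k with z_0 = 0 satisfies E[z_k z_kᵀ] ⪯ W for all k ≥ 0. -/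
open Matrix MeasureTheory

/-- The matrix of expectations `E[z wᵀ]`, entrywise. -/
noncomputable def covE {n : ℕ} {Ω : Type*} [MeasurableSpace Ω] (μ : Measure Ω)
    (z w : Ω → Fin n → ℝ) : Matrix (Fin n) (Fin n) ℝ :=
  Matrix.of fun i j => ∫ ω, z ω i * w ω j ∂μ

/-- The Loewner order on real matrices: `A ⪯ B` iff `B - A` is positive semidefinite. -/
def LoeLE {n : ℕ} (A B : Matrix (Fin n) (Fin n) ℝ) : Prop := (B - A).PosSemidef

lemma covE_rec {n : ℕ} {Ω : Type*} [MeasurableSpace Ω] (μ : Measure Ω)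
    (A : Matrix (Fin n) (Fin n) ℝ) (zk wk zk1 : Ω → Fin n → ℝ)
    (hrec : ∀ ω, zk1 ω = A *ᵥ zk ω + wk ω)
    (hIntz : ∀ i j, Integrable (fun ω => zk ω i * zk ω j) μ)
    (hIntzw : ∀ i j, Integrable (fun ω => zk ω i * wk ω j) μ)
    (hIntw : ∀ i j, Integrable (fun ω => wk ω i * wk ω j) μ) :
    covE μ zk1 zk1 = A * covE μ zk zk * Aᵀ +
      (A * covE μ zk wk + covE μ wk zk * Aᵀ + covE μ wk wk) := by
  ext i j
  have key : ∀ ω, zk1 ω i * zk1 ω j =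
      (∑ l, ∑ m, A i l * A j m * (zk ω l * zk ω m)) +
      (∑ l, A i l * (zk ω l * wk ω j)) +
      ((∑ m, A j m * (wk ω i * zk ω m)) + wk ω i * wk ω j) := by
    intro ω
    rw [hrec]
    simp only [Pi.add_apply, mulVec, dotProduct]
    rw [add_mul, mul_add, mul_add, Finset.sum_mul_sum, Finset.sum_mul, Finset.mul_sum]
    congr 1
    · congr 1
      · apply Finset.sum_congr rfl; intro l _
        apply Finset.sum_congr rfl; intro m _; ring
      · apply Finset.sum_congr rfl; intro l _; ring
    · congr 1
      apply Finset.sum_congr rfl; intro m _; ring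
  have I1 : Integrable (fun ω => ∑ l, ∑ m, A i l * A j m * (zk ω l * zk ω m)) μ := by
    apply integrable_finset_sum; intro l _
    apply integrable_finset_sum; intro m _
    exact (hIntz l m).const_mul _
  have I2 : Integrable (fun ω => ∑ l, A i l * (zk ω l * wk ω j)) μ := by
    apply integrable_finset_sum; intro l _
    exact (hIntzw l j).const_mul _
  have I3 : Integrable (fun ω => ∑ m, A j m * (wk ω i * zk ω m)) μ := by
    apply integrable_finset_sum; intro m _
    exact ((hIntzw m i).congr (by filter_upwards with ω using mul_comm _ _)).const_mul _
  have I4 : Integrable (fun ω => wk ω i * wk ω j) μ := hIntw i j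
  have I12 : Integrable (fun ω => (∑ l, ∑ m, A i l * A j m * (zk ω l * zk ω m)) +
      (∑ l, A i l * (zk ω l * wk ω j))) μ := I1.add I2
  have I34 : Integrable (fun ω => (∑ m, A j m * (wk ω i * zk ω m)) + wk ω i * wk ω j) μ :=
    I3.add I4
  simp only [covE, Matrix.add_apply, Matrix.mul_apply, Matrix.transpose_apply, Matrix.of_apply]
  have step1 : (∫ ω, zk1 ω i * zk1 ω j ∂μ) =
      (∑ l, ∑ m, A i l * A j m * ∫ ω, zk ω l * zk ω m ∂μ) +
      (∑ l, A i l * ∫ ω, zk ω l * wk ω j ∂μ) +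
      ((∑ m, A j m * ∫ ω, wk ω i * zk ω m ∂μ) + ∫ ω, wk ω i * wk ω j ∂μ) := by
    rw [show (fun ω => zk1 ω i * zk1 ω j) = fun ω =>
        (∑ l, ∑ m, A i l * A j m * (zk ω l * zk ω m)) +
        (∑ l, A i l * (zk ω l * wk ω j)) +
        ((∑ m, A j m * (wk ω i * zk ω m)) + wk ω i * wk ω j) from funext key]
    rw [integral_add I12 I34, integral_add I1 I2, integral_add I3 I4]
    congr 1
    · congr 1
      · rw [integral_finset_sum _ (fun l _ => integrable_finset_sum _
          (fun m _ => (hIntz l m).const_mul _))]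
        apply Finset.sum_congr rfl; intro l _
        rw [integral_finset_sum _ (fun m _ => (hIntz l m).const_mul _)]
        apply Finset.sum_congr rfl; intro m _
        exact integral_const_mul _ _
      · rw [integral_finset_sum _ (fun l _ => (hIntzw l j).const_mul _)]
        apply Finset.sum_congr rfl; intro l _
        exact integral_const_mul _ _
    · congr 1
      rw [integral_finset_sum _ (fun m _ => ((hIntzw m i).congr
        (by filter_upwards with ω using mul_comm _ _)).const_mul _)]
      apply Finset.sum_congr rfl; intro m _
      exact integral_const_mul _ _
  rw [step1]
  have h13 : (∑ l, ∑ m, A i l * A j m * ∫ ω, zk ω l * zk ω m ∂μ) =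
      ∑ x, (∑ l, A i l * ∫ ω, zk ω l * zk ω x ∂μ) * A j x := by
    rw [Finset.sum_comm]
    apply Finset.sum_congr rfl; intro m _
    rw [Finset.sum_mul]
    apply Finset.sum_congr rfl; intro l _; ring
  have h3 : (∑ m, A j m * ∫ ω, wk ω i * zk ω m ∂μ) =
      ∑ x, (∫ ω, wk ω i * zk ω x ∂μ) * A j x := by
    apply Finset.sum_congr rfl; intro m _; ring
  rw [h13, h3]
  ring

/-- correlation bound `Γ_w` and `A W Aᵀ + Γ_w ⪯ W` with `W ≻ 0` imply
`E[z_k z_kᵀ] ⪯ W` for all `k ≥ 0` along `z_{k+1} = A z_k + w_k`, `z_0 = 0`. -/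
theorem stmt_11 {n : ℕ} {Ω : Type*} [MeasurableSpace Ω] (μ : Measure Ω)
    [IsProbabilityMeasure μ]
    (A Γw W : Matrix (Fin n) (Fin n) ℝ) (hW : W.PosDef)
    (w z : ℕ → Ω → Fin n → ℝ)
    (hz0 : ∀ ω, z 0 ω = 0)
    (hzrec : ∀ k ω, z (k + 1) ω = A *ᵥ z k ω + w k ω)
    (hIntz : ∀ k i j, Integrable (fun ω => z k ω i * z k ω j) μ)
    (hIntzw : ∀ k i j, Integrable (fun ω => z k ω i * w k ω j) μ)
    (hIntw : ∀ k i j, Integrable (fun ω => w k ω i * w k ω j) μ)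
    (hcb : ∀ k, LoeLE
      (A * covE μ (z k) (w k) + covE μ (w k) (z k) * Aᵀ + covE μ (w k) (w k)) Γw)
    (hLyap : LoeLE (A * W * Aᵀ + Γw) W) :
    ∀ k, LoeLE (covE μ (z k) (z k)) W := by
  intro k
  induction k with
  | zero =>
      have h0 : covE μ (z 0) (z 0) = 0 := by
        ext i j
        simp [covE, hz0]
      rw [LoeLE, h0, sub_zero]
      exact hW.posSemidef
  | succ k ih =>
      have hconj : (A * (W - covE μ (z k) (z k)) * Aᵀ).PosSemidef := by
        have := ih.mul_mul_conjTranspose_same A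
        rwa [conjTranspose_eq_transpose_of_trivial] at this
      have h1 := hcb k
      rw [LoeLE] at h1 hLyap ⊢
      have htot := (hLyap.add hconj).add h1
      have heq : W - covE μ (z (k+1)) (z (k+1)) =
          (W - (A * W * Aᵀ + Γw)) + A * (W - covE μ (z k) (z k)) * Aᵀ +
          (Γw - (A * covE μ (z k) (w k) + covE μ (w k) (z k) * Aᵀ + covE μ (w k) (w k))) := by
        rw [covE_rec μ A (z k) (w k) (z (k+1)) (hzrec k) (hIntz k) (hIntzw k) (hIntw k)]
        noncomm_ring
      rw [heq]
      exact htot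
end

section
/- Suppose Γ̃ and Γ_w are symmetric matrices with Γ̃ ≻ 0, and H Γ̃ Hᵀ ⪯ γ Γ̃ for some γ ∈ [0,1). If Γ_{i,j} = H^{j-i} Γ̃ for i ≤ j, then Γ_{i,j} Γ̃^{-1} Γ_{i,j}ᵀ ⪯ γ^{j-i} Γ̃ for all i ≤ j. -/
/-!
Since `Γ̃` is symmetric, `Γ_{i,j} Γ̃⁻¹ Γ_{i,j}ᵀ = H^k Γ̃ (H^k)ᵀ` with `k = j - i`. Conjugation by `H`
and scaling by `γ ^ k ≥ 0` are monotone for the Loewner order, so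
`H^(k+1) Γ̃ (H^(k+1))ᵀ ⪯ H (γ^k Γ̃) Hᵀ ⪯ γ^(k+1) Γ̃` by induction on `k`.
-/

open Matrix

namespace LoeLE

variable {n : ℕ} {A B C : Matrix (Fin n) (Fin n) ℝ}

lemma refl (A : Matrix (Fin n) (Fin n) ℝ) : LoeLE A A := by
  simpa [LoeLE] using PosSemidef.zero

lemma trans (hAB : LoeLE A B) (hBC : LoeLE B C) : LoeLE A C := by
  simpa [LoeLE] using PosSemidef.add hBC hAB

lemma smul (hAB : LoeLE A B) {c : ℝ} (hc : 0 ≤ c) : LoeLE (c • A) (c • B) := by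
  simpa [LoeLE, smul_sub] using PosSemidef.smul hAB hc

lemma mul_mul_transpose (hAB : LoeLE A B) (M : Matrix (Fin n) (Fin n) ℝ) :
    LoeLE (M * A * Mᵀ) (M * B * Mᵀ) := by
  simpa [LoeLE, Matrix.mul_sub, Matrix.sub_mul] using PosSemidef.mul_mul_conjTranspose_same hAB M

end LoeLE

lemma loeLE_pow_mul_mul_transpose {n : ℕ} {H Γ : Matrix (Fin n) (Fin n) ℝ} {γ : ℝ}
    (hγ : 0 ≤ γ) (hH : LoeLE (H * Γ * Hᵀ) (γ • Γ)) (k : ℕ) :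
    LoeLE (H ^ k * Γ * (H ^ k)ᵀ) (γ ^ k • Γ) := by
  induction k with
  | zero => simpa using LoeLE.refl Γ
  | succ k ih =>
    have hconj : H ^ (k + 1) * Γ * (H ^ (k + 1))ᵀ = H * (H ^ k * Γ * (H ^ k)ᵀ) * Hᵀ := by
      simp only [pow_succ', transpose_mul, Matrix.mul_assoc]
    have hscale : H * (γ ^ k • Γ) * Hᵀ = γ ^ k • (H * Γ * Hᵀ) := by
      rw [Matrix.mul_smul, Matrix.smul_mul]
    rw [hconj, pow_succ, mul_smul]
    exact (ih.mul_mul_transpose H).trans (hscale ▸ hH.smul (pow_nonneg hγ k))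

lemma mul_inv_mul_transpose_of_posDef {n : ℕ} {Γ : Matrix (Fin n) (Fin n) ℝ} (hΓ : Γ.PosDef)
    (M : Matrix (Fin n) (Fin n) ℝ) : M * Γ * Γ⁻¹ * (M * Γ)ᵀ = M * Γ * Mᵀ := by
  have hsymm : Γᵀ = Γ := hΓ.isHermitian.eq
  have hinv : Γ * Γ⁻¹ = 1 := mul_nonsing_inv Γ (isUnit_iff_ne_zero.mpr hΓ.det_pos.ne')
  rw [transpose_mul, hsymm, Matrix.mul_assoc M Γ Γ⁻¹, hinv, Matrix.mul_one, Matrix.mul_assoc]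

theorem stmt_15_general {n : ℕ} (H Γt : Matrix (Fin n) (Fin n) ℝ)
    (hΓt : Γt.PosDef) (γ : ℝ) (hγ0 : 0 ≤ γ)
    (hH : LoeLE (H * Γt * Hᵀ) (γ • Γt))
    (Γc : ℕ → ℕ → Matrix (Fin n) (Fin n) ℝ)
    (hΓc : ∀ i j, i ≤ j → Γc i j = H ^ (j - i) * Γt) :
    ∀ i j, i ≤ j → LoeLE (Γc i j * Γt⁻¹ * (Γc i j)ᵀ) (γ ^ (j - i) • Γt) := by
  intro i j hij
  rw [hΓc i j hij, mul_inv_mul_transpose_of_posDef hΓt]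
  exact loeLE_pow_mul_mul_transpose hγ0 hH (j - i)

/-- if `H Γ̃ Hᵀ ⪯ γ Γ̃` with `Γ̃ ≻ 0` and `Γ_{i,j} = H^{j-i} Γ̃`,
then `Γ_{i,j} Γ̃⁻¹ Γ_{i,j}ᵀ ⪯ γ^{j-i} Γ̃` for all `i ≤ j`. -/
theorem stmt_15 {n : ℕ} (H Γt : Matrix (Fin n) (Fin n) ℝ)
    (hΓt : Γt.PosDef) (γ : ℝ) (hγ0 : 0 ≤ γ) (hγ1 : γ < 1)
    (hH : LoeLE (H * Γt * Hᵀ) (γ • Γt))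
    (Γc : ℕ → ℕ → Matrix (Fin n) (Fin n) ℝ)
    (hΓc : ∀ i j, i ≤ j → Γc i j = H ^ (j - i) * Γt) :
    ∀ i j, i ≤ j → LoeLE (Γc i j * Γt⁻¹ * (Γc i j)ᵀ) (γ ^ (j - i) • Γt) :=
  stmt_15_general H Γt hΓt γ hγ0 hH Γc hΓc
end

section
/- Suppose the random sequence {w_k} has correlation bound Γ_w ≻ 0 for A, and W ≻ 0 satisfies the set inclusion A·𝔹(W,1) + 𝔹(Γ_w, r) ⊆ 𝔹(W,1) for some r ≥ 1. Then the matrix inequality A W Aᵀ + Γ_w ⪯ W holds. -/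
open Matrix MeasureTheory Pointwise

/-- The ellipsoid `𝔹(Γ, r) = {x : xᵀ Γ⁻¹ x ≤ r}` for a positive definite matrix `Γ`. -/
def ballInv {n : ℕ} (Γ : Matrix (Fin n) (Fin n) ℝ) (r : ℝ) : Set (Fin n → ℝ) :=
  {x | x ⬝ᵥ Γ⁻¹ *ᵥ x ≤ r}

/-!
For `W ≻ 0` the support function of the ellipsoid `𝔹(W, 1)` in direction `x` is `√(xᵀ W x)`
(Cauchy–Schwarz for the inner product given by `W⁻¹`, attained at a multiple of `W x`).
Support functions add over Minkowski sums and turn `A` into `Aᵀ`, so the inclusion yields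
`√(xᵀ A W Aᵀ x) + √(xᵀ Γ_w x) ≤ √(xᵀ W x)` for every `x`; squaring gives
`xᵀ (A W Aᵀ + Γ_w) x ≤ xᵀ W x`.
-/

namespace Matrix

variable {ι : Type*} [Fintype ι]

theorem PosSemidef.sq_dotProduct_mulVec_le [DecidableEq ι] {M : Matrix ι ι ℝ}
    (hM : M.PosSemidef) (u v : ι → ℝ) : (u ⬝ᵥ M *ᵥ v) ^ 2 ≤ (u ⬝ᵥ M *ᵥ u) * (v ⬝ᵥ M *ᵥ v) := by
  have hMT : Mᵀ = M := by simpa [conjTranspose_eq_transpose_of_trivial] using hM.isHermitian.eq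
  have hsymm : (M.toLinearMap₂' ℝ).IsSymm := LinearMap.isSymm_def.mpr fun x y => by
    rw [toLinearMap₂'_apply', toLinearMap₂'_apply', RingHom.id_apply, dotProduct_mulVec,
      ← mulVec_transpose, hMT, dotProduct_comm]
  simpa only [toLinearMap₂'_apply'] using
    LinearMap.BilinForm.apply_sq_le_of_symm (M.toLinearMap₂' ℝ)
      (by simpa [toLinearMap₂'_apply'] using hM.dotProduct_mulVec_nonneg) hsymm u v

theorem IsSymm.mulVec_dotProduct_inv_mulVec [DecidableEq ι] {R : Type*} [CommRing R]
    {M : Matrix ι ι R} (hM : M.IsSymm) (hdet : IsUnit M.det) (v y : ι → R) :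
    (M *ᵥ v) ⬝ᵥ M⁻¹ *ᵥ y = v ⬝ᵥ y := by
  rw [dotProduct_mulVec, ← vecMul_transpose, hM.eq, vecMul_vecMul, mul_nonsing_inv M hdet,
    vecMul_one]

theorem dotProduct_mulVec_mul_transpose {R : Type*} [CommRing R] (A M : Matrix ι ι R)
    (x : ι → R) : x ⬝ᵥ (A * M * Aᵀ) *ᵥ x = (Aᵀ *ᵥ x) ⬝ᵥ M *ᵥ (Aᵀ *ᵥ x) := by
  rw [← mulVec_mulVec, ← mulVec_mulVec, dotProduct_mulVec, ← mulVec_transpose]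

end Matrix

open Matrix

theorem ballInv_mono {n : ℕ} (Γ : Matrix (Fin n) (Fin n) ℝ) {r s : ℝ} (hrs : r ≤ s) :
    ballInv Γ r ⊆ ballInv Γ s :=
  fun _ hx => le_trans hx hrs

theorem Matrix.PosDef.isGreatest_dotProduct_ballInv {n : ℕ} {W : Matrix (Fin n) (Fin n) ℝ}
    (hW : W.PosDef) (v : Fin n → ℝ) :
    IsGreatest ((v ⬝ᵥ ·) '' ballInv W 1) √(v ⬝ᵥ W *ᵥ v) := by
  have hsymm : W.IsSymm := by simpa using hW.isHermitian
  have hdet : IsUnit W.det := (isUnit_iff_isUnit_det W).mp hW.isUnit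
  have hq : 0 ≤ v ⬝ᵥ W *ᵥ v := by simpa using hW.posSemidef.dotProduct_mulVec_nonneg v
  have hWv : (W *ᵥ v) ⬝ᵥ W⁻¹ *ᵥ (W *ᵥ v) = v ⬝ᵥ W *ᵥ v :=
    hsymm.mulVec_dotProduct_inv_mulVec hdet v _
  refine ⟨⟨(√(v ⬝ᵥ W *ᵥ v))⁻¹ • (W *ᵥ v), ?_, ?_⟩, ?_⟩
  · -- for `v = 0` the witness is `0`, since `(√0)⁻¹ = 0`
    change _ ≤ (1 : ℝ)
    rw [mulVec_smul, dotProduct_smul, smul_dotProduct, hWv, smul_eq_mul, smul_eq_mul,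
      ← mul_assoc, ← mul_inv, Real.mul_self_sqrt hq]
    exact inv_mul_le_one_of_le₀ le_rfl hq
  · simp only [dotProduct_smul, smul_eq_mul, inv_mul_eq_div, Real.div_sqrt]
  · rintro _ ⟨y, hy, rfl⟩
    have hcs := hW.inv.posSemidef.sq_dotProduct_mulVec_le (W *ᵥ v) y
    rw [hWv, hsymm.mulVec_dotProduct_inv_mulVec hdet] at hcs
    refine (le_abs_self _).trans (Real.abs_le_sqrt (hcs.trans ?_))
    simpa using mul_le_mul_of_nonneg_left (show y ⬝ᵥ W⁻¹ *ᵥ y ≤ 1 from hy) hq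

theorem sqrt_add_sqrt_le_of_image_add_subset {n : ℕ} {A Γ W : Matrix (Fin n) (Fin n) ℝ}
    (hΓ : Γ.PosDef) (hW : W.PosDef) {r : ℝ} (hr : 1 ≤ r)
    (hinc : (A *ᵥ ·) '' ballInv W 1 + ballInv Γ r ⊆ ballInv W 1) (x : Fin n → ℝ) :
    √((Aᵀ *ᵥ x) ⬝ᵥ W *ᵥ (Aᵀ *ᵥ x)) + √(x ⬝ᵥ Γ *ᵥ x) ≤ √(x ⬝ᵥ W *ᵥ x) := by
  obtain ⟨y₁, hy₁, h₁⟩ := (hW.isGreatest_dotProduct_ballInv (Aᵀ *ᵥ x)).1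
  obtain ⟨y₂, hy₂, h₂⟩ := (hΓ.isGreatest_dotProduct_ballInv x).1
  have hsum : A *ᵥ y₁ + y₂ ∈ ballInv W 1 :=
    hinc (Set.add_mem_add (Set.mem_image_of_mem _ hy₁) (ballInv_mono Γ hr hy₂))
  calc √((Aᵀ *ᵥ x) ⬝ᵥ W *ᵥ (Aᵀ *ᵥ x)) + √(x ⬝ᵥ Γ *ᵥ x) = x ⬝ᵥ (A *ᵥ y₁ + y₂) := by
        rw [← h₁, ← h₂, dotProduct_add, dotProduct_mulVec, ← mulVec_transpose]
    _ ≤ √(x ⬝ᵥ W *ᵥ x) := (hW.isGreatest_dotProduct_ballInv x).2 ⟨_, hsum, rfl⟩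

theorem add_le_of_sqrt_add_sqrt_le {a b c : ℝ} (ha : 0 ≤ a) (hb : 0 ≤ b) (hc : 0 ≤ c)
    (h : √a + √b ≤ √c) : a + b ≤ c :=
  calc a + b ≤ (√a + √b) ^ 2 := by
        nlinarith [Real.sq_sqrt ha, Real.sq_sqrt hb, Real.sqrt_nonneg a, Real.sqrt_nonneg b]
    _ ≤ (√c) ^ 2 := pow_le_pow_left₀ (by positivity) h 2
    _ = c := Real.sq_sqrt hc

theorem stmt_17_general {n : ℕ}
    (A Γw W : Matrix (Fin n) (Fin n) ℝ) (hΓw : Γw.PosDef) (hW : W.PosDef)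
    (r : ℝ) (hr : 1 ≤ r)
    (hinc : (A *ᵥ ·) '' ballInv W 1 + ballInv Γw r ⊆ ballInv W 1) :
    LoeLE (A * W * Aᵀ + Γw) W := by
  have hAWA : (A * W * Aᵀ).PosSemidef := by
    simpa using hW.posSemidef.mul_mul_conjTranspose_same A
  refine posSemidef_iff_dotProduct_mulVec.mpr
    ⟨hW.isHermitian.sub (hAWA.isHermitian.add hΓw.isHermitian), fun x => ?_⟩
  have hquad : star x ⬝ᵥ (W - (A * W * Aᵀ + Γw)) *ᵥ x
      = x ⬝ᵥ W *ᵥ x - ((Aᵀ *ᵥ x) ⬝ᵥ W *ᵥ (Aᵀ *ᵥ x) + x ⬝ᵥ Γw *ᵥ x) := by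
    simp only [star_trivial, sub_mulVec, add_mulVec, dotProduct_sub, dotProduct_add,
      dotProduct_mulVec_mul_transpose]
  rw [hquad, sub_nonneg]
  have hW' := hW.posSemidef.dotProduct_mulVec_nonneg
  have hΓw' := hΓw.posSemidef.dotProduct_mulVec_nonneg
  simp only [star_trivial] at hW' hΓw'
  exact add_le_of_sqrt_add_sqrt_le (hW' _) (hΓw' x) (hW' x)
    (sqrt_add_sqrt_le_of_image_add_subset hΓw hW hr hinc x)

/-- with a correlation bound `Γ_w ≻ 0` and `W ≻ 0`, the set inclusion
`A 𝔹(W,1) + 𝔹(Γ_w,r) ⊆ 𝔹(W,1)` for some `r ≥ 1` implies `A W Aᵀ + Γ_w ⪯ W`. -/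
theorem stmt_17 {n : ℕ} {Ω : Type*} [MeasurableSpace Ω] (μ : Measure Ω)
    [IsProbabilityMeasure μ]
    (A Γw W : Matrix (Fin n) (Fin n) ℝ) (hΓw : Γw.PosDef) (hW : W.PosDef)
    (w z : ℕ → Ω → Fin n → ℝ)
    (hz0 : ∀ ω, z 0 ω = 0)
    (hzrec : ∀ k ω, z (k + 1) ω = A *ᵥ z k ω + w k ω)
    (hcb : ∀ k, LoeLE
      (A * covE μ (z k) (w k) + covE μ (w k) (z k) * Aᵀ + covE μ (w k) (w k)) Γw)
    (r : ℝ) (hr : 1 ≤ r)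
    (hinc : (A *ᵥ ·) '' ballInv W 1 + ballInv Γw r ⊆ ballInv W 1) :
    LoeLE (A * W * Aᵀ + Γw) W :=
  stmt_17_general A Γw W hΓw hW r hr hinc
end
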